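/- Let n < m be positive integers and let α₁,…,αₙ, β_{n+1},…,β_m be positive integers with α₁+⋯+αₙ = β_{n+1}+⋯+β_m. A point (x₁,…,x_m) ∈ ℝ^m belongs to Δ(α,β) if and only if x₁+⋯+x_m ≤ 1 + min{0, x_{n+1}/β_{n+1},…, x_m/β_m} and x_i ≥ −α_i · min{0, x_{n+1}/β_{n+1},…, x_m/β_m} for i = 1,…,n. -/

import Mathlib

/-!
Δ(α,β) is the hull of the standard simplex and one more vertex `b`, so `x ∈ Δ(α,β)` iff
`x = t • b + y` with `t ≥ 0`, `y ≥ 0` and `t + ∑ y ≤ 1`. Since `∑ b = 0` we have `∑ y = ∑ x`.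
The constraints `y ≥ 0` on the coordinates where `b` is negative say exactly `t ≥ -μ(x)`, and all
other constraints only get harder as `t` grows, so `x ∈ Δ(α,β)` iff `t = -μ(x)` is admissible,
which is the stated system of inequalities.
-/

open Finset

namespace Fin

variable {n m : ℕ}

theorem sum_univ_split_of_le {M : Type*} [AddCommMonoid M] (h : n ≤ m) (f : Fin m → M) :
    ∑ i, f i = ∑ i : Fin n, f ⟨i, by omega⟩ + ∑ j : Fin (m - n), f ⟨n + j, by omega⟩ := by
  rw [← (finCongr (Nat.add_sub_cancel' h)).sum_comp, Fin.sum_univ_add]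
  rfl

theorem forall_split_of_le (h : n ≤ m) {P : Fin m → Prop} :
    (∀ i, P i) ↔ (∀ i : Fin n, P ⟨i, by omega⟩) ∧ ∀ j : Fin (m - n), P ⟨n + j, by omega⟩ := by
  rw [← (finCongr (Nat.add_sub_cancel' h)).forall_congr_right, Fin.forall_fin_add]
  rfl

end Fin

section

variable {𝕜 ι E : Type*} [Field 𝕜] [LinearOrder 𝕜] [IsStrictOrderedRing 𝕜]

theorem Convex.sum_smul_mem_of_zero_mem [AddCommGroup E] [Module 𝕜 E] [Fintype ι] {s : Set E}
    (hs : Convex 𝕜 s) (h₀ : 0 ∈ s) {w : ι → 𝕜} {p : ι → E} (hw₀ : ∀ i, 0 ≤ w i)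
    (hw₁ : ∑ i, w i ≤ 1) (hp : ∀ i, p i ∈ s) : ∑ i, w i • p i ∈ s := by
  have := hs.sum_mem (t := univ) (w := fun o : Option ι => o.elim (1 - ∑ i, w i) w)
    (z := fun o : Option ι => o.elim 0 p)
    (by rintro (_ | i) -; exacts [sub_nonneg.2 hw₁, hw₀ i]) (by simp [Fintype.sum_option])
    (by rintro (_ | i) -; exacts [h₀, hp i])
  simpa [Fintype.sum_option] using this

theorem exists_nonneg_mul_le_iff_of_isLeast {b x : ι → 𝕜} {τ c : 𝕜}
    (hτ : IsLeast {t | 0 ≤ t ∧ ∀ i, b i < 0 → t * b i ≤ x i} τ) :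
    (∃ t, 0 ≤ t ∧ (∀ i, t * b i ≤ x i) ∧ t ≤ c) ↔ (∀ i, 0 ≤ b i → τ * b i ≤ x i) ∧ τ ≤ c := by
  refine ⟨fun ⟨t, ht, htx, htc⟩ => ?_, fun ⟨hτx, hτc⟩ => ⟨τ, hτ.1.1, fun i => ?_, hτc⟩⟩
  · have hτt : τ ≤ t := hτ.2 ⟨ht, fun i _ => htx i⟩
    exact ⟨fun i hi => (mul_le_mul_of_nonneg_right hτt hi).trans (htx i), hτt.trans htc⟩
  · rcases lt_or_ge (b i) 0 with hi | hi
    exacts [hτ.1.2 i hi, hτx i hi]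

variable [Fintype ι] [DecidableEq ι]

theorem mem_convexHull_zero_single_insert_iff {b x : ι → 𝕜} :
    x ∈ convexHull 𝕜 ({0} ∪ Set.range (fun i => Pi.single i 1) ∪ {b}) ↔
      ∃ t, 0 ≤ t ∧ (∀ i, t * b i ≤ x i) ∧ ∑ i, (x i - t * b i) + t ≤ 1 := by
  constructor
  · intro hx
    refine convexHull_min
      (t := {y | ∃ t, 0 ≤ t ∧ (∀ i, t * b i ≤ y i) ∧ ∑ i, (y i - t * b i) + t ≤ 1}) ?_ ?_ hx
    · rintro p ((rfl | ⟨i, rfl⟩) | rfl)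
      · exact ⟨0, le_rfl, by simp, by simp⟩
      · refine ⟨0, le_rfl, fun j => ?_, ?_⟩
        · simpa using (Pi.single_nonneg.2 zero_le_one : (0 : ι → 𝕜) ≤ Pi.single i 1) j
        · simp
      · exact ⟨1, zero_le_one, by simp, by simp⟩
    · rintro y ⟨t, ht, hty, hsy⟩ z ⟨s, hs, hsz, hsz'⟩ a c ha hc hac
      refine ⟨a * t + c * s, by positivity, fun i => ?_, ?_⟩
      · simp only [Pi.add_apply, Pi.smul_apply, smul_eq_mul]
        nlinarith [mul_le_mul_of_nonneg_left (hty i) ha, mul_le_mul_of_nonneg_left (hsz i) hc]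
      · have : ∑ i, ((a • y + c • z) i - (a * t + c * s) * b i) =
            a * ∑ i, (y i - t * b i) + c * ∑ i, (z i - s * b i) := by
          simp only [mul_sum, ← sum_add_distrib, Pi.add_apply, Pi.smul_apply, smul_eq_mul]
          exact sum_congr rfl fun i _ => by ring
        rw [this]
        nlinarith [mul_le_mul_of_nonneg_left hsy ha, mul_le_mul_of_nonneg_left hsz' hc]
  · rintro ⟨t, ht, htx, hsum⟩
    have hx : x = ∑ o : Option ι,
        o.elim t (fun i => x i - t * b i) • o.elim b (fun i => Pi.single i 1) := by
      ext j
      simp [Fintype.sum_option, Pi.single_apply]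
    rw [hx]
    refine (convex_convexHull 𝕜 _).sum_smul_mem_of_zero_mem (subset_convexHull 𝕜 _ (by simp))
      ?_ ?_ ?_
    · rintro (_ | i)
      exacts [ht, sub_nonneg.2 (htx i)]
    · rw [Fintype.sum_option]; simpa [add_comm] using hsum
    · rintro (_ | i)
      · exact subset_convexHull 𝕜 _ (Or.inr rfl)
      · exact subset_convexHull 𝕜 _ (Or.inl (Or.inr ⟨i, rfl⟩))

theorem mem_convexHull_zero_single_insert_iff_of_sum_eq_zero {b x : ι → 𝕜} (hb : ∑ i, b i = 0) :
    x ∈ convexHull 𝕜 ({0} ∪ Set.range (fun i => Pi.single i 1) ∪ {b}) ↔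
      ∃ t, 0 ≤ t ∧ (∀ i, t * b i ≤ x i) ∧ t ≤ 1 - ∑ i, x i := by
  simp only [mem_convexHull_zero_single_insert_iff, sum_sub_distrib, ← mul_sum, hb, mul_zero,
    sub_zero, le_sub_iff_add_le']

end

section

variable {n m : ℕ} (α : Fin n → ℕ) (β : Fin (m - n) → ℕ)

/-- The vertex `b_{m+1} = (α, -β)` of `Δ(α,β)`. -/
def extraVertex (i : Fin m) : ℝ :=
  if h : (i : ℕ) < n then α ⟨i, h⟩ else -(β ⟨i - n, by omega⟩ : ℝ)

theorem extraVertex_of_lt (h : n ≤ m) (i : Fin n) : extraVertex α β ⟨i, by omega⟩ = α i :=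
  dif_pos i.isLt

theorem extraVertex_add (j : Fin (m - n)) : extraVertex α β ⟨n + j, by omega⟩ = -(β j : ℝ) := by
  simp [extraVertex]

theorem sum_extraVertex (h : n ≤ m) (hsum : ∑ i, α i = ∑ j, β j) :
    ∑ i, extraVertex α β i = 0 := by
  rw [Fin.sum_univ_split_of_le h]
  simp only [extraVertex_of_lt α β h, extraVertex_add, sum_neg_distrib, ← Nat.cast_sum, hsum,
    add_neg_cancel]

theorem isLeast_neg_min_zero_inf'_div (h : n ≤ m) (hβ : ∀ j, 0 < β j)
    (hne : (univ : Finset (Fin (m - n))).Nonempty) (x : Fin m → ℝ) :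
    IsLeast {t | 0 ≤ t ∧ ∀ i, extraVertex α β i < 0 → t * extraVertex α β i ≤ x i}
      (-min 0 (univ.inf' hne fun j => x ⟨n + j, by omega⟩ / β j)) := by
  have key (t : ℝ) : (∀ i, extraVertex α β i < 0 → t * extraVertex α β i ≤ x i) ↔
      ∀ j : Fin (m - n), -t ≤ x ⟨n + j, by omega⟩ / β j := by
    rw [Fin.forall_split_of_le h]
    simp [extraVertex_of_lt α β h, extraVertex_add, hβ, le_div_iff₀]
  refine ⟨⟨neg_nonneg.2 (min_le_left _ _), (key _).2 fun j => ?_⟩, fun t ⟨ht, htx⟩ => ?_⟩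
  · rw [neg_neg]
    exact (min_le_right _ _).trans (inf'_le _ (mem_univ j))
  · rw [neg_le]
    exact le_min (neg_nonpos.2 ht) ((le_inf'_iff _ _).2 fun j _ => (key t).1 htx j)

end

/-- inequalities defining the polytope Δ(α,β). -/
theorem stmt_8 (n m : ℕ) (hnm : n < m)
    (α : Fin n → ℕ) (β : Fin (m - n) → ℕ)
    (hβ : ∀ j, 0 < β j)
    (hsum : ∑ i, α i = ∑ j, β j)
    (b : Fin m → ℝ)
    (hb : ∀ i : Fin m, b i = if h : (i : ℕ) < n then (α ⟨i, h⟩ : ℝ)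
      else -(β ⟨(i : ℕ) - n, by have := i.isLt; omega⟩ : ℝ))
    (Δ : Set (Fin m → ℝ))
    (hΔ : Δ = convexHull ℝ
      ({0} ∪ Set.range (fun i : Fin m => Pi.single i (1 : ℝ)) ∪ {b}))
    (μ : (Fin m → ℝ) → ℝ)
    (hμ : ∀ x : Fin m → ℝ, μ x = min 0
      (Finset.univ.inf' ⟨⟨0, by omega⟩, Finset.mem_univ _⟩
        (fun j : Fin (m - n) =>
          x ⟨n + j, by have := j.isLt; omega⟩ / (β j : ℝ)))) :
    ∀ x : Fin m → ℝ, x ∈ Δ ↔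
      ((∑ i, x i ≤ 1 + μ x) ∧
        ∀ i : Fin n, -(α i : ℝ) * μ x ≤ x ⟨i, by have := i.isLt; omega⟩) := by
  intro x
  obtain rfl : b = extraVertex α β := funext hb
  have hτ := isLeast_neg_min_zero_inf'_div α β hnm.le hβ ⟨⟨0, by omega⟩, mem_univ _⟩ x
  rw [← hμ] at hτ
  have hβ' (j : Fin (m - n)) : ¬ (0 : ℝ) ≤ -(β j : ℝ) := by simpa using (hβ j).ne'
  rw [hΔ, mem_convexHull_zero_single_insert_iff_of_sum_eq_zero (sum_extraVertex α β hnm.le hsum),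
    exists_nonneg_mul_le_iff_of_isLeast hτ, Fin.forall_split_of_le hnm.le, and_comm]
  simp only [extraVertex_of_lt α β hnm.le, extraVertex_add, Nat.cast_nonneg, forall_const, hβ',
    false_imp_iff, implies_true, and_true]
  exact and_congr ⟨fun h => by linarith, fun h => by linarith⟩
    (forall_congr' fun i => by rw [neg_mul_comm, mul_comm])
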